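/- Let (X, β) be a finite labelled Markov chain over a finite nonempty alphabet A, and let ν be its trace measure family. Let M be a nonempty complete metric space with its Borel σ-algebra, and let σ be a contraction operator interpretation of A on M. Then for every x ∈ X, the pushforward measure (σ_ω)_♯ ν(x) satisfies the LMC equations: (σ_ω)_♯ ν(x) = Σ_{(a,y) ∈ A × X} β x (a, y) • (σ_a)_♯ ((σ_ω)_♯ ν(y)). -/
import Mathlib


open Filter Topology MeasureTheory
open scoped NNReal ENNReal

/-- The cylinder set of a word `w`: all streams beginning with `w`. -/
def cyl {A : Type} (w : List A) : Set (ℕ → A) :=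
  {s | ∀ i : Fin w.length, s i.val = w.get i}

/-- `seqApp σ s p n = (σ_{s 0} ∘ σ_{s 1} ∘ ⋯ ∘ σ_{s n}) p`. -/
def seqApp {A M : Type} (σ : A → M → M) (s : ℕ → A) (p : M) (n : ℕ) : M :=
  (List.ofFn fun i : Fin (n + 1) => s i.val).foldr (fun a m => σ a m) p

/-- `wordWeight β x [a₁, …, aₙ]` is the sum over all tuples `(x₁, …, xₙ) ∈ Xⁿ` of
the products `β x (a₁, x₁) · β x₁ (a₂, x₂) ⋯ β x_{n−1} (aₙ, xₙ)`. -/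
def wordWeight {X A : Type} [Fintype X] (β : X → A × X → ℝ≥0) : X → List A → ℝ≥0
  | _, [] => 1
  | x, a :: w => ∑ y : X, β x (a, y) * wordWeight β y w

def consMap {A : Type} (a : A) (s : ℕ → A) : ℕ → A := fun n => Nat.casesOn n a s

lemma measurable_consMap {A : Type} [MeasurableSpace A] (a : A) :
    Measurable (consMap a : (ℕ → A) → (ℕ → A)) := by
  apply measurable_pi_lambda
  intro n
  cases n with
  | zero => exact measurable_const
  | succ k => exact measurable_pi_apply k

lemma cyl_nil {A : Type} : cyl ([] : List A) = Set.univ := by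
  ext s; simp [cyl]

lemma measurableSet_cyl {A : Type} [MeasurableSpace A] [MeasurableSingletonClass A]
    (w : List A) : MeasurableSet (cyl w) := by
  have : cyl w = ⋂ i : Fin w.length, (fun s : ℕ → A => s i.val) ⁻¹' {w.get i} := by
    ext s; simp [cyl]
  rw [this]
  exact MeasurableSet.iInter fun i => (measurable_pi_apply _) (measurableSet_singleton _)

lemma consMap_preimage_cyl_eq {A : Type} (a : A) (w : List A) :
    consMap a ⁻¹' cyl (a :: w) = cyl w := by
  ext s
  simp only [Set.mem_preimage, cyl, Set.mem_setOf_eq]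
  constructor
  · intro h i
    exact h ⟨i.val + 1, Nat.succ_lt_succ i.isLt⟩
  · intro h i
    rcases i with ⟨iv, hiv⟩
    cases iv with
    | zero => rfl
    | succ k => exact h ⟨k, Nat.lt_of_succ_lt_succ hiv⟩

lemma consMap_preimage_cyl_ne {A : Type} {a b : A} (hab : a ≠ b) (w : List A) :
    consMap a ⁻¹' cyl (b :: w) = ∅ := by
  ext s
  simp only [Set.mem_preimage, cyl, Set.mem_setOf_eq, Set.mem_empty_iff_false, iff_false]
  intro h
  exact hab (h ⟨0, Nat.succ_pos _⟩)

lemma cyl_inter_of_le {A : Type} {w w' : List A} (h : w.length ≤ w'.length)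
    (hne : (cyl w ∩ cyl w').Nonempty) : cyl w ∩ cyl w' = cyl w' := by
  obtain ⟨s, hs, hs'⟩ := hne
  apply Set.inter_eq_right.mpr
  intro t ht i
  have hi' : i.val < w'.length := lt_of_lt_of_le i.isLt h
  calc t i.val = w'.get ⟨i.val, hi'⟩ := ht ⟨i.val, hi'⟩
    _ = s i.val := (hs' ⟨i.val, hi'⟩).symm
    _ = w.get i := hs i

lemma isPiSystem_cyl {A : Type} :
    IsPiSystem {S : Set (ℕ → A) | ∃ w : List A, S = cyl w} := by
  rintro S ⟨w, rfl⟩ T ⟨w', rfl⟩ hne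
  rcases le_total w.length w'.length with h | h
  · exact ⟨w', (cyl_inter_of_le h hne).symm ▸ rfl⟩
  · refine ⟨w, ?_⟩
    rw [Set.inter_comm] at hne ⊢
    exact (cyl_inter_of_le h hne).symm ▸ rfl

lemma mem_cyl_ofFn {A : Type} {n : ℕ} (g : Fin n → A) (s : ℕ → A) :
    s ∈ cyl (List.ofFn g) ↔ ∀ j : Fin n, s j.val = g j := by
  constructor
  · intro h j
    have := h (Fin.cast (by simp) j)
    rw [List.get_ofFn] at this
    simpa using this
  · intro h i
    rw [List.get_ofFn]
    simpa using h (Fin.cast (by simp) i)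

lemma eval_eq_measurable {A : Type} [Fintype A] (i : ℕ) (a : A) :
    MeasurableSet[MeasurableSpace.generateFrom {S : Set (ℕ → A) | ∃ w : List A, S = cyl w}]
      {s : ℕ → A | s i = a} := by
  have : {s : ℕ → A | s i = a}
      = ⋃ g : {g : Fin (i+1) → A // g (Fin.last i) = a}, cyl (List.ofFn g.1) := by
    ext s
    simp only [Set.mem_setOf_eq, Set.mem_iUnion]
    constructor
    · intro hs
      exact ⟨⟨fun j => s j.val, hs⟩, (mem_cyl_ofFn _ _).mpr fun j => rfl⟩
    · rintro ⟨⟨g, hg⟩, hs⟩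
      have := (mem_cyl_ofFn _ _).mp hs (Fin.last i)
      simpa [hg] using this
  rw [this]
  exact MeasurableSet.iUnion fun g =>
    MeasurableSpace.measurableSet_generateFrom ⟨_, rfl⟩

lemma pi_eq_generateFrom_cyl {A : Type} [Fintype A] [MeasurableSpace A]
    [TopologicalSpace A] [DiscreteTopology A] [BorelSpace A] :
    (MeasurableSpace.pi : MeasurableSpace (ℕ → A))
      = MeasurableSpace.generateFrom {S : Set (ℕ → A) | ∃ w : List A, S = cyl w} := by
  apply le_antisymm
  · rw [MeasurableSpace.pi]
    apply iSup_le
    intro i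
    have hmeas : @Measurable (ℕ → A) A
        (MeasurableSpace.generateFrom {S : Set (ℕ → A) | ∃ w : List A, S = cyl w}) _
        (fun s => s i) := by
      intro t _
      have : (fun s : ℕ → A => s i) ⁻¹' t = ⋃ a ∈ t, {s : ℕ → A | s i = a} := by
        ext s; simp
      rw [this]
      exact MeasurableSet.biUnion t.to_countable fun a _ => eval_eq_measurable i a
    exact measurable_iff_comap_le.mp hmeas
  · exact MeasurableSpace.generateFrom_le (by rintro S ⟨w, rfl⟩; exact measurableSet_cyl w)

lemma seqApp_succ {A M : Type} (σ : A → M → M) (s : ℕ → A) (p : M) (n : ℕ) :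
    seqApp σ s p (n + 1) = σ (s 0) (seqApp σ (fun k => s (k + 1)) p n) := by
  simp [seqApp, List.ofFn_succ]

lemma seqApp_consMap {A M : Type} (σ : A → M → M) (a : A) (s : ℕ → A) (p : M) (n : ℕ) :
    seqApp σ (consMap a s) p (n + 1) = σ a (seqApp σ s p n) := by
  rw [seqApp_succ]
  rfl

lemma measurable_seqApp {A M : Type} [Fintype A]
    [TopologicalSpace A] [DiscreteTopology A] [MeasurableSpace A] [BorelSpace A]
    [MetricSpace M] [MeasurableSpace M] [BorelSpace M]
    (σ : A → M → M) (hσ : ∀ a, Continuous (σ a)) (p : M) (n : ℕ) :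
    Measurable (fun s : ℕ → A => seqApp σ s p n) := by
  induction n generalizing σ hσ p with
  | zero =>
    have : (fun s : ℕ → A => seqApp σ s p 0) = (fun a : A => σ a p) ∘ fun s => s 0 := by
      funext s; simp [seqApp]
    rw [this]
    exact (measurable_of_countable _).comp (measurable_pi_apply 0)
  | succ n ih =>
    have huncurry : Measurable (fun q : M × A => σ q.2 q.1) :=
      measurable_from_prod_countable_left fun a => (hσ a).measurable
    have hshift : Measurable (fun s : ℕ → A => fun k => s (k + 1)) :=
      measurable_pi_lambda _ fun k => measurable_pi_apply (k + 1)
    have : (fun s : ℕ → A => seqApp σ s p (n + 1))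
        = (fun q : M × A => σ q.2 q.1)
          ∘ (fun s : ℕ → A => (seqApp σ (fun k => s (k + 1)) p n, s 0)) := by
      funext s; simp [seqApp_succ]
    rw [this]
    exact huncurry.comp (((ih σ hσ p).comp hshift).prodMk (measurable_pi_apply 0))

lemma measurable_sigma_omega {A M : Type} [Fintype A] [Nonempty M]
    [TopologicalSpace A] [DiscreteTopology A] [MeasurableSpace A] [BorelSpace A]
    [MetricSpace M] [MeasurableSpace M] [BorelSpace M]
    (σ : A → M → M) (hσ : ∀ a, Continuous (σ a))
    (σω : (ℕ → A) → M)
    (hσω : ∀ (s : ℕ → A) (p : M), Tendsto (fun n => seqApp σ s p n) atTop (𝓝 (σω s))) :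
    Measurable σω := by
  obtain ⟨p⟩ := ‹Nonempty M›
  apply measurable_of_tendsto_metrizable (f := fun n s => seqApp σ s p n)
    (fun n => measurable_seqApp σ hσ p n)
  rw [tendsto_pi_nhds]
  exact fun s => hσω s p

lemma sigma_omega_consMap {A M : Type} [Nonempty M]
    [MetricSpace M]
    (σ : A → M → M) (hσ : ∀ a, Continuous (σ a))
    (σω : (ℕ → A) → M)
    (hσω : ∀ (s : ℕ → A) (p : M), Tendsto (fun n => seqApp σ s p n) atTop (𝓝 (σω s)))
    (a : A) (s : ℕ → A) : σω (consMap a s) = σ a (σω s) := by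
  obtain ⟨p⟩ := ‹Nonempty M›
  have h1 : Tendsto (fun n => seqApp σ (consMap a s) p (n + 1)) atTop
      (𝓝 (σω (consMap a s))) :=
    (hσω (consMap a s) p).comp (tendsto_add_atTop_nat 1)
  have h2 : Tendsto (fun n => σ a (seqApp σ s p n)) atTop (𝓝 (σ a (σω s))) :=
    ((hσ a).tendsto _).comp (hσω s p)
  simp_rw [seqApp_consMap] at h1
  exact tendsto_nhds_unique h1 h2

lemma nu_eq {X A : Type} [Fintype X] [Fintype A]
    [TopologicalSpace A] [DiscreteTopology A] [MeasurableSpace A] [BorelSpace A]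
    (β : X → A × X → ℝ≥0) (hβ : ∀ x, ∑ p : A × X, β x p = 1)
    (ν : X → Measure (ℕ → A)) (hνprob : ∀ x, IsProbabilityMeasure (ν x))
    (hν : ∀ (x : X) (w : List A), ν x (cyl w) = (wordWeight β x w : ℝ≥0∞))
    (x : X) :
    ν x = ∑ p : A × X, (β x p : ℝ≥0∞) • Measure.map (consMap p.1) (ν p.2) := by
  classical
  have hprob := hνprob x
  have happly : ∀ w : List A,
      (∑ p : A × X, (β x p : ℝ≥0∞) • Measure.map (consMap p.1) (ν p.2)) (cyl w)
        = ∑ p : A × X, (β x p : ℝ≥0∞) * ν p.2 (consMap p.1 ⁻¹' cyl w) := by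
    intro w
    rw [Measure.finset_sum_apply]
    refine Finset.sum_congr rfl fun p _ => ?_
    rw [Measure.smul_apply, smul_eq_mul,
      Measure.map_apply (measurable_consMap p.1) (measurableSet_cyl w)]
  have huniv : (∑ p : A × X, (β x p : ℝ≥0∞) • Measure.map (consMap p.1) (ν p.2))
      Set.univ = 1 := by
    have := happly []
    rw [cyl_nil] at this
    rw [this]
    have : ∀ p : A × X, consMap p.1 ⁻¹' (Set.univ : Set (ℕ → A)) = Set.univ := fun p => rfl
    simp only [this]
    have : ∀ p : A × X, ν p.2 (Set.univ : Set (ℕ → A)) = 1 := fun p => (hνprob p.2).measure_univ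
    simp only [this, mul_one]
    rw [← ENNReal.coe_finset_sum, hβ x, ENNReal.coe_one]
  refine MeasureTheory.ext_of_generate_finite _ pi_eq_generateFrom_cyl isPiSystem_cyl ?_ ?_
  · rintro S ⟨w, rfl⟩
    rw [happly w, hν x w]
    cases w with
    | nil =>
      have : ∀ p : A × X, consMap p.1 ⁻¹' cyl ([] : List A) = Set.univ := by
        intro p; rw [cyl_nil]; rfl
      simp only [this]
      have h1 : ∀ p : A × X, ν p.2 (Set.univ : Set (ℕ → A)) = 1 :=
        fun p => (hνprob p.2).measure_univ
      simp only [h1, mul_one, wordWeight, ENNReal.coe_one]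
      rw [← ENNReal.coe_finset_sum, hβ x, ENNReal.coe_one]
    | cons b w' =>
      rw [Fintype.sum_prod_type]
      have hterm : ∀ a : A, ∑ y : X, (β x (a, y) : ℝ≥0∞) * ν y (consMap a ⁻¹' cyl (b :: w'))
          = if a = b then ∑ y : X, (β x (b, y) : ℝ≥0∞) * (wordWeight β y w' : ℝ≥0∞) else 0 := by
        intro a
        by_cases hab : a = b
        · subst hab
          rw [if_pos rfl]
          refine Finset.sum_congr rfl fun y _ => ?_
          rw [consMap_preimage_cyl_eq, hν y w']
        · rw [if_neg hab]
          refine Finset.sum_eq_zero fun y _ => ?_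
          rw [consMap_preimage_cyl_ne hab, measure_empty, mul_zero]
      simp only [hterm]
      rw [Finset.sum_ite_eq' Finset.univ b
        (fun a => ∑ y : X, (β x (b, y) : ℝ≥0∞) * (wordWeight β y w' : ℝ≥0∞))]
      simp only [Finset.mem_univ, if_pos]
      show ((wordWeight β x (b :: w') : ℝ≥0) : ℝ≥0∞) = _
      rw [show wordWeight β x (b :: w') = ∑ y : X, β x (b, y) * wordWeight β y w' from rfl]
      push_cast
      rfl
  · rw [huniv, (hνprob x).measure_univ]

/-- For a finite labelled Markov chain `(X, β)` with trace measure family `ν`,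
and a contraction operator interpretation `σ` (with limit map `σω`) on a nonempty
complete metric space `M` with its Borel σ-algebra, the pushforward measures
`(σω)_♯ (ν x)` satisfy the LMC equations. -/
theorem pushforward_trace_measure_is_solution {X A M : Type} [Fintype X] [Fintype A]
    [Nonempty A]
    [TopologicalSpace A] [DiscreteTopology A] [MeasurableSpace A] [BorelSpace A]
    [MetricSpace M] [CompleteSpace M] [Nonempty M] [MeasurableSpace M] [BorelSpace M]
    (β : X → A × X → ℝ≥0) (hβ : ∀ x, ∑ p : A × X, β x p = 1)
    (ν : X → Measure (ℕ → A)) (hνprob : ∀ x, IsProbabilityMeasure (ν x))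
    (hν : ∀ (x : X) (w : List A), ν x (cyl w) = (wordWeight β x w : ℝ≥0∞))
    (σ : A → M → M) (c : A → ℝ≥0) (hc : ∀ a, c a < 1)
    (hσ : ∀ a, LipschitzWith (c a) (σ a))
    (σω : (ℕ → A) → M)
    (hσω : ∀ (s : ℕ → A) (p : M), Tendsto (fun n => seqApp σ s p n) atTop (𝓝 (σω s))) :
    ∀ x : X, Measure.map σω (ν x)
      = ∑ p : A × X, (β x p : ℝ≥0∞) • Measure.map (σ p.1) (Measure.map σω (ν p.2)) := by
  intro x
  classical
  have hσcont : ∀ a, Continuous (σ a) := fun a => (hσ a).continuous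
  have hσωmeas : Measurable σω := measurable_sigma_omega σ hσcont σω hσω
  have hkey : ∀ (a : A) (s : ℕ → A), σω (consMap a s) = σ a (σω s) :=
    fun a s => sigma_omega_consMap σ hσcont σω hσω a s
  ext E hE
  rw [Measure.map_apply hσωmeas hE,
    nu_eq β hβ ν hνprob hν x, Measure.finset_sum_apply, Measure.finset_sum_apply]
  refine Finset.sum_congr rfl fun p _ => ?_
  rw [Measure.smul_apply, Measure.smul_apply, smul_eq_mul, smul_eq_mul]
  congr 1
  rw [Measure.map_apply (measurable_consMap p.1) (hσωmeas hE),
    Measure.map_apply ((hσcont p.1).measurable) hE,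
    Measure.map_apply hσωmeas ((hσcont p.1).measurable hE)]
  congr 1
  ext s
  simp only [Set.mem_preimage, hkey p.1 s]
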